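/- Let θ̂_u and θ̂_b be square-integrable real-valued random variables on a probability space with E[θ̂_u] = θ₀, Var(θ̂_u) = σ_u² > 0, Var(θ̂_b) = σ_b², Cov(θ̂_u, θ̂_b) = σ_bu, and σ_u² + σ_b² − 2σ_bu > 0. Define λ̂ = (σ_u² − σ_bu)/((θ̂_u − θ̂_b)² + σ_u² + σ_b² − 2σ_bu) and θ̂_λ̂ = λ̂·θ̂_b + (1 − λ̂)·θ̂_u. Then E[(θ̂_λ̂ − θ₀)²] ≤ σ_u² + |σ_u² − σ_bu|·σ_u/√(σ_u² + σ_b² − 2σ_bu) + (σ_u² − σ_bu)²/(4·(σ_u² + σ_b² − 2σ_bu)). -/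

import Mathlib

open MeasureTheory ProbabilityTheory Filter

/-
Writing `Y = θ̂_u − θ₀` and `D = θ̂_u − θ̂_b`, the error of the combination estimator is
`Y − a·D/(D² + v)` with `a = σ_u² − σ_bu` and `v = σ_u² + σ_b² − 2σ_bu`. By AM-GM, `D² + v ≥ 2|D|√v`,
so the shrinkage term is bounded by `|a|/(2√v)` uniformly in `D`. Expanding the square then bounds
the squared error pointwise by `Y² + |a||Y|/√v + a²/(4v)`, and it remains to take expectations using
`E[Y²] = σ_u²` and `E|Y| ≤ √(E[Y²])`.
-/

lemma abs_mul_div_sq_add_le (a d : ℝ) {v : ℝ} (hv : 0 < v) :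
    |a * d / (d ^ 2 + v)| ≤ |a| / (2 * Real.sqrt v) := by
  have hsqrt : 0 < Real.sqrt v := Real.sqrt_pos.2 hv
  have hamgm : 2 * |d| * Real.sqrt v ≤ d ^ 2 + v := by
    nlinarith [sq_nonneg (|d| - Real.sqrt v), sq_abs d, Real.sq_sqrt hv.le]
  rw [abs_div, abs_mul, abs_of_pos (by positivity : 0 < d ^ 2 + v),
    div_le_div_iff₀ (by positivity) (by positivity)]
  nlinarith [abs_nonneg a]

lemma sq_sub_mul_div_sq_add_le (u a d : ℝ) {v : ℝ} (hv : 0 < v) :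
    (u - a * d / (d ^ 2 + v)) ^ 2 ≤ u ^ 2 + |a| / Real.sqrt v * |u| + a ^ 2 / (4 * v) := by
  set x := a * d / (d ^ 2 + v)
  have hx : |x| ≤ |a| / (2 * Real.sqrt v) := abs_mul_div_sq_add_le a d hv
  have hcross : 2 * |x| * |u| ≤ |a| / Real.sqrt v * |u| := by
    calc 2 * |x| * |u| ≤ 2 * (|a| / (2 * Real.sqrt v)) * |u| := by gcongr
      _ = |a| / Real.sqrt v * |u| := by field_simp
  have hsq : x ^ 2 ≤ a ^ 2 / (4 * v) := by
    calc x ^ 2 = |x| ^ 2 := (sq_abs x).symm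
      _ ≤ (|a| / (2 * Real.sqrt v)) ^ 2 := by gcongr
      _ = a ^ 2 / (4 * v) := by rw [div_pow, sq_abs, mul_pow, Real.sq_sqrt hv.le]; ring
  nlinarith [neg_abs_le (x * u), abs_mul x u]

section Expectation

variable {Ω : Type*} [MeasurableSpace Ω] {μ : Measure Ω} [IsProbabilityMeasure μ]

-- The variance of `|Y|` is `E[Y²] − (E|Y|)² ≥ 0`.
lemma integral_abs_le_sqrt_integral_sq {Y : Ω → ℝ} (hY : MemLp Y 2 μ) :
    ∫ ω, |Y ω| ∂μ ≤ Real.sqrt (∫ ω, Y ω ^ 2 ∂μ) := by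
  have hvar := variance_nonneg (fun ω => |Y ω|) μ
  rw [variance_eq_sub (X := fun ω => |Y ω|) hY.abs] at hvar
  simp only [Pi.pow_apply, sq_abs] at hvar
  exact (le_abs_self _).trans (Real.abs_le_sqrt (by linarith))

lemma integral_sq_sub_mul_div_sq_add_le {Y : Ω → ℝ} (hY : MemLp Y 2 μ) (D : Ω → ℝ)
    (a : ℝ) {v : ℝ} (hv : 0 < v) :
    ∫ ω, (Y ω - a * D ω / (D ω ^ 2 + v)) ^ 2 ∂μ
      ≤ ∫ ω, Y ω ^ 2 ∂μ + |a| * Real.sqrt (∫ ω, Y ω ^ 2 ∂μ) / Real.sqrt v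
        + a ^ 2 / (4 * v) := by
  have hY2 : Integrable (fun ω => Y ω ^ 2) μ := hY.integrable_sq
  have hYabs : Integrable (fun ω => |a| / Real.sqrt v * |Y ω|) μ :=
    ((hY.integrable one_le_two).abs).const_mul _
  have hsum : Integrable (fun ω => Y ω ^ 2 + |a| / Real.sqrt v * |Y ω|) μ := hY2.add hYabs
  calc ∫ ω, (Y ω - a * D ω / (D ω ^ 2 + v)) ^ 2 ∂μ
      ≤ ∫ ω, (Y ω ^ 2 + |a| / Real.sqrt v * |Y ω| + a ^ 2 / (4 * v)) ∂μ :=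
        integral_mono_of_nonneg (ae_of_all _ fun _ => sq_nonneg _)
          (hsum.add (integrable_const _))
          (ae_of_all _ fun ω => sq_sub_mul_div_sq_add_le (Y ω) a (D ω) hv)
    _ = ∫ ω, Y ω ^ 2 ∂μ + |a| / Real.sqrt v * ∫ ω, |Y ω| ∂μ + a ^ 2 / (4 * v) := by
        rw [integral_add hsum (integrable_const _), integral_add hY2 hYabs,
          integral_const_mul, integral_const, probReal_univ, one_smul]
    _ ≤ ∫ ω, Y ω ^ 2 ∂μ + |a| / Real.sqrt v * Real.sqrt (∫ ω, Y ω ^ 2 ∂μ)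
          + a ^ 2 / (4 * v) := by
        gcongr
        exact integral_abs_le_sqrt_integral_sq hY
    _ = _ := by ring

end Expectation

theorem mse_bound_cov_raw_general
    {Ω : Type*} [MeasurableSpace Ω] (P : Measure Ω) [IsProbabilityMeasure P]
    (θu θb : Ω → ℝ) (θ₀ σu2 σb2 σbu : ℝ)
    (hθu : MemLp θu 2 P)
    (hEu : ∫ ω, θu ω ∂P = θ₀)
    (hVu : variance θu P = σu2)
    (hv : σu2 + σb2 - 2 * σbu > 0) :
    ∫ ω, (((σu2 - σbu) / ((θu ω - θb ω) ^ 2 + σu2 + σb2 - 2 * σbu)) * θb ω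
        + (1 - (σu2 - σbu) / ((θu ω - θb ω) ^ 2 + σu2 + σb2 - 2 * σbu)) * θu ω
        - θ₀) ^ 2 ∂P
      ≤ σu2 + |σu2 - σbu| * Real.sqrt σu2 / Real.sqrt (σu2 + σb2 - 2 * σbu)
        + (σu2 - σbu) ^ 2 / (4 * (σu2 + σb2 - 2 * σbu)) := by
  have herror : ∀ ω, ((σu2 - σbu) / ((θu ω - θb ω) ^ 2 + σu2 + σb2 - 2 * σbu)) * θb ω
        + (1 - (σu2 - σbu) / ((θu ω - θb ω) ^ 2 + σu2 + σb2 - 2 * σbu)) * θu ω - θ₀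
      = (θu ω - θ₀) - (σu2 - σbu) * (θu ω - θb ω)
          / ((θu ω - θb ω) ^ 2 + (σu2 + σb2 - 2 * σbu)) := fun ω => by
    ring_nf
  have hsecond : ∫ ω, (θu ω - θ₀) ^ 2 ∂P = σu2 := by
    rw [← hVu, variance_eq_integral hθu.aemeasurable, hEu]
  simp_rw [herror]
  have hY : MemLp (fun ω => θu ω - θ₀) 2 P := hθu.sub (memLp_const θ₀)
  simpa only [hsecond] using
    integral_sq_sub_mul_div_sq_add_le hY (fun ω => θu ω - θb ω) (σu2 - σbu) hv

/-- Bound on the MSE of the combination estimator (known variances/covariance), raw form: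
`E[(θ̂_λ̂ − θ₀)²] ≤ σ_u² + |σ_u² − σ_bu|·σ_u/√(σ_u² + σ_b² − 2σ_bu)
  + (σ_u² − σ_bu)²/(4·(σ_u² + σ_b² − 2σ_bu))`. -/
theorem mse_bound_cov_raw
    {Ω : Type*} [MeasurableSpace Ω] (P : Measure Ω) [IsProbabilityMeasure P]
    (θu θb : Ω → ℝ) (θ₀ σu2 σb2 σbu : ℝ)
    (hθu : MemLp θu 2 P) (hθb : MemLp θb 2 P)
    (hEu : ∫ ω, θu ω ∂P = θ₀)
    (hVu : variance θu P = σu2) (hσu2pos : 0 < σu2)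
    (hVb : variance θb P = σb2)
    (hCov : ∫ ω, (θu ω - θ₀) * (θb ω - ∫ x, θb x ∂P) ∂P = σbu)
    (hv : σu2 + σb2 - 2 * σbu > 0) :
    ∫ ω, (((σu2 - σbu) / ((θu ω - θb ω) ^ 2 + σu2 + σb2 - 2 * σbu)) * θb ω
        + (1 - (σu2 - σbu) / ((θu ω - θb ω) ^ 2 + σu2 + σb2 - 2 * σbu)) * θu ω
        - θ₀) ^ 2 ∂P
      ≤ σu2 + |σu2 - σbu| * Real.sqrt σu2 / Real.sqrt (σu2 + σb2 - 2 * σbu)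
        + (σu2 - σbu) ^ 2 / (4 * (σu2 + σb2 - 2 * σbu)) :=
  mse_bound_cov_raw_general P θu θb θ₀ σu2 σb2 σbu hθu hEu hVu hv
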